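/- arXiv:math/9911005 — 3 statements merged into one kernel-verified Lean document; each statement's English description precedes it below -/
import Mathlib

section
/- Let ~ be the smallest equivalence relation on square integer matrices (of all sizes) generated by the following elementary steps: (i) unimodular congruence, replacing an m × m matrix M by A M Aᵀ where A is an m × m integer matrix invertible over ℤ; (ii) column enlargement, replacing an m × m matrix M by the (m+2) × (m+2) matrix M' with M' i j = M i j for i, j < m, M' i m = ξ i for i < m, M' m m = x, M' m (m+1) = 1, and all other new entries equal to 0, for some column vector ξ ∈ ℤ^m and some x ∈ ℤ; (iii) row enlargement, replacing M by the (m+2) × (m+2) matrix M' with M' i j = M i j for i, j < m, M' m j = ξ j for j < m, M' m m = x, M' (m+1) m = 1, and all other new entries equal to 0. Let ≤ be the reflexive-transitive closure of the one-step relation 'M₂ is obtained from M₁ by a single unimodular congruence, column enlargement, or row enlargement'. Then for any two square integer matrices M₁ and M₂ with M₁ ~ M₂, there exists a square integer matrix M₃ such that M₁ ≤ M₃ and M₂ ≤ M₃. -/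
open Matrix

/-- Square integer matrices of arbitrary size. -/
def SqMat : Type := Σ m : ℕ, Matrix (Fin m) (Fin m) ℤ

/-- Column enlargement of an `m × m` matrix `M` by a column vector `ξ` and an
entry `x`: the new `(m+2) × (m+2)` matrix agrees with `M` on the first `m` rows
and columns, has `ξ` in the first `m` entries of column `m`, `x` in position
`(m, m)`, `1` in position `(m, m+1)`, and `0` in all other new entries. -/
def colEnlarge {m : ℕ} (M : Matrix (Fin m) (Fin m) ℤ) (ξ : Fin m → ℤ) (x : ℤ) :
    Matrix (Fin (m + 2)) (Fin (m + 2)) ℤ := fun i j =>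
  if hi : (i : ℕ) < m then
    if hj : (j : ℕ) < m then M ⟨i, hi⟩ ⟨j, hj⟩
    else if (j : ℕ) = m then ξ ⟨i, hi⟩
    else 0
  else if (i : ℕ) = m then
    if (j : ℕ) = m then x
    else if (j : ℕ) = m + 1 then 1
    else 0
  else 0

/-- Row enlargement of an `m × m` matrix `M` by a row vector `ξ` and an
entry `x`: the new `(m+2) × (m+2)` matrix agrees with `M` on the first `m` rows
and columns, has `ξ` in the first `m` entries of row `m`, `x` in position
`(m, m)`, `1` in position `(m+1, m)`, and `0` in all other new entries. -/
def rowEnlarge {m : ℕ} (M : Matrix (Fin m) (Fin m) ℤ) (ξ : Fin m → ℤ) (x : ℤ) :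
    Matrix (Fin (m + 2)) (Fin (m + 2)) ℤ := fun i j =>
  if hj : (j : ℕ) < m then
    if hi : (i : ℕ) < m then M ⟨i, hi⟩ ⟨j, hj⟩
    else if (i : ℕ) = m then ξ ⟨j, hj⟩
    else 0
  else if (j : ℕ) = m then
    if (i : ℕ) = m then x
    else if (i : ℕ) = m + 1 then 1
    else 0
  else 0

/-- One elementary step: a unimodular congruence, a column enlargement, or a
row enlargement. -/
inductive SStep : SqMat → SqMat → Prop
  | congr {m : ℕ} (M A : Matrix (Fin m) (Fin m) ℤ) (hA : IsUnit A) :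
      SStep ⟨m, M⟩ ⟨m, A * M * Aᵀ⟩
  | colEnl {m : ℕ} (M : Matrix (Fin m) (Fin m) ℤ) (ξ : Fin m → ℤ) (x : ℤ) :
      SStep ⟨m, M⟩ ⟨m + 2, colEnlarge M ξ x⟩
  | rowEnl {m : ℕ} (M : Matrix (Fin m) (Fin m) ℤ) (ξ : Fin m → ℤ) (x : ℤ) :
      SStep ⟨m, M⟩ ⟨m + 2, rowEnlarge M ξ x⟩

theorem rowEnlarge_eq {m : ℕ} (M : Matrix (Fin m) (Fin m) ℤ) (ξ : Fin m → ℤ) (x : ℤ) :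
    rowEnlarge M ξ x = (colEnlarge Mᵀ ξ x)ᵀ := rfl

theorem sstep_transpose : ∀ {p q : SqMat}, SStep p q → SStep ⟨p.1, p.2ᵀ⟩ ⟨q.1, q.2ᵀ⟩ := by
  intro p q h
  cases h with
  | congr M A hA =>
      have := SStep.congr Mᵀ A hA
      simpa [Matrix.transpose_mul, Matrix.mul_assoc] using this
  | colEnl M ξ x =>
      have := SStep.rowEnl Mᵀ ξ x
      simpa [rowEnlarge_eq] using this
  | rowEnl M ξ x =>
      have := SStep.colEnl Mᵀ ξ x
      have e : (rowEnlarge M ξ x)ᵀ = colEnlarge Mᵀ ξ x := by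
        rw [rowEnlarge_eq, Matrix.transpose_transpose]
      simpa [e] using this

theorem step_reindex {k : ℕ} (N : Matrix (Fin k) (Fin k) ℤ) (f : Fin k ≃ Fin k) :
    SStep ⟨k, N⟩ ⟨k, N.submatrix f f⟩ := by
  have hPQ : (1 : Matrix (Fin k) (Fin k) ℤ).submatrix f id *
      (1 : Matrix (Fin k) (Fin k) ℤ).submatrix id f = 1 := by
    have := Matrix.submatrix_mul_equiv (1 : Matrix (Fin k) (Fin k) ℤ)
      (1 : Matrix (Fin k) (Fin k) ℤ) f (Equiv.refl (Fin k)) f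
    simpa [Matrix.submatrix_one_equiv] using this
  have hQP : (1 : Matrix (Fin k) (Fin k) ℤ).submatrix id f *
      (1 : Matrix (Fin k) (Fin k) ℤ).submatrix f id = 1 := by
    have := Matrix.submatrix_mul_equiv (1 : Matrix (Fin k) (Fin k) ℤ)
      (1 : Matrix (Fin k) (Fin k) ℤ) (id : Fin k → Fin k) f (id : Fin k → Fin k)
    simpa using this
  have hP : IsUnit ((1 : Matrix (Fin k) (Fin k) ℤ).submatrix f id) :=
    ⟨⟨_, _, hPQ, hQP⟩, rfl⟩
  have hPT : ((1 : Matrix (Fin k) (Fin k) ℤ).submatrix f id)ᵀ =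
      (1 : Matrix (Fin k) (Fin k) ℤ).submatrix id f := by
    rw [Matrix.transpose_submatrix, Matrix.transpose_one]
  have h1 : (1 : Matrix (Fin k) (Fin k) ℤ).submatrix f id * N = N.submatrix f id := by
    have := Matrix.submatrix_mul_equiv (1 : Matrix (Fin k) (Fin k) ℤ)
      N f (Equiv.refl (Fin k)) id
    simpa using this
  have h2 : N.submatrix (f : Fin k → Fin k) id *
      (1 : Matrix (Fin k) (Fin k) ℤ).submatrix id f = N.submatrix f f := by
    have := Matrix.submatrix_mul_equiv N (1 : Matrix (Fin k) (Fin k) ℤ)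
      f (Equiv.refl (Fin k)) f
    simpa using this
  have := SStep.congr N _ hP
  rwa [hPT, h1, h2] at this

theorem congr_inv {m : ℕ} (M A : Matrix (Fin m) (Fin m) ℤ) (hA : IsUnit A) :
    SStep ⟨m, A * M * Aᵀ⟩ ⟨m, M⟩ := by
  have hd : IsUnit A.det := Matrix.isUnit_iff_isUnit_det A |>.mp hA
  have h1 : A⁻¹ * A = 1 := Matrix.nonsing_inv_mul A hd
  have h1' : A * A⁻¹ = 1 := Matrix.mul_nonsing_inv A hd
  have h2 : Aᵀ * A⁻¹ᵀ = 1 := by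
    rw [← Matrix.transpose_mul, h1, Matrix.transpose_one]
  have := SStep.congr (A * M * Aᵀ) A⁻¹ ⟨⟨A⁻¹, A, h1, h1'⟩, rfl⟩
  have e : A⁻¹ * (A * M * Aᵀ) * A⁻¹ᵀ = M := by
    calc A⁻¹ * (A * M * Aᵀ) * A⁻¹ᵀ
        = (A⁻¹ * A) * (M * (Aᵀ * A⁻¹ᵀ)) := by simp only [Matrix.mul_assoc]
      _ = M := by rw [h1, h2, Matrix.one_mul, Matrix.mul_one]
  rwa [e] at this

def colB {m : ℕ} (ξ : Fin m → ℤ) : Matrix (Fin m) (Fin 2) ℤ :=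
  fun i j => if (j : ℕ) = 0 then ξ i else 0

def colD (x : ℤ) : Matrix (Fin 2) (Fin 2) ℤ :=
  fun i j => if (i : ℕ) = 0 then (if (j : ℕ) = 0 then x else 1) else 0

theorem fse_symm_lt {m n : ℕ} (i : Fin (m + n)) (h : (i : ℕ) < m) :
    finSumFinEquiv.symm i = Sum.inl ⟨i, h⟩ := by
  rw [Equiv.symm_apply_eq]
  exact Fin.ext rfl

theorem fse_symm_ge {m n : ℕ} (i : Fin (m + n)) (h : m ≤ (i : ℕ)) :
    finSumFinEquiv.symm i = Sum.inr ⟨(i : ℕ) - m, by omega⟩ := by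
  rw [Equiv.symm_apply_eq]
  exact Fin.ext (by simp; omega)

theorem colEnlarge_blocks {m : ℕ} (M : Matrix (Fin m) (Fin m) ℤ) (ξ : Fin m → ℤ) (x : ℤ) :
    colEnlarge M ξ x = (Matrix.fromBlocks M (colB ξ) 0 (colD x)).submatrix
      finSumFinEquiv.symm finSumFinEquiv.symm := by
  ext i j
  rw [Matrix.submatrix_apply]
  have hi2 : (i : ℕ) < m + 2 := i.isLt
  have hj2 : (j : ℕ) < m + 2 := j.isLt
  rcases Nat.lt_or_ge (i : ℕ) m with hi | hi <;>
    rcases Nat.lt_or_ge (j : ℕ) m with hj | hj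
  · rw [fse_symm_lt i hi, fse_symm_lt j hj]
    simp only [colEnlarge, Matrix.fromBlocks, Matrix.of_apply, Sum.elim_inl, Sum.elim_inr,
      colB, colD]
    split_ifs <;> first | rfl | omega
  · rw [fse_symm_lt i hi, fse_symm_ge j hj]
    simp only [colEnlarge, Matrix.fromBlocks, Matrix.of_apply, Sum.elim_inl, Sum.elim_inr,
      colB, colD]
    split_ifs <;> first | rfl | omega
  · rw [fse_symm_ge i hi, fse_symm_lt j hj]
    simp only [colEnlarge, Matrix.fromBlocks, Matrix.of_apply, Sum.elim_inl, Sum.elim_inr,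
      colB, colD, Matrix.zero_apply]
    split_ifs <;> first | rfl | omega
  · rw [fse_symm_ge i hi, fse_symm_ge j hj]
    simp only [colEnlarge, Matrix.fromBlocks, Matrix.of_apply, Sum.elim_inl, Sum.elim_inr,
      colB, colD]
    split_ifs <;> first | rfl | omega

theorem colB_mul {m : ℕ} (A : Matrix (Fin m) (Fin m) ℤ) (ξ : Fin m → ℤ) :
    A * colB ξ = colB (A.mulVec ξ) := by
  ext i j
  simp only [Matrix.mul_apply, colB, Matrix.mulVec, dotProduct]
  split_ifs with h
  · rfl
  · simp

theorem step_congr_colEnl {m : ℕ} (M A : Matrix (Fin m) (Fin m) ℤ) (hA : IsUnit A)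
    (ξ : Fin m → ℤ) (x : ℤ) :
    SStep ⟨m + 2, colEnlarge M ξ x⟩ ⟨m + 2, colEnlarge (A * M * Aᵀ) (A.mulVec ξ) x⟩ := by
  set e := (finSumFinEquiv : Fin m ⊕ Fin 2 ≃ Fin (m + 2))
  set A' : Matrix (Fin (m + 2)) (Fin (m + 2)) ℤ :=
    (Matrix.fromBlocks A 0 0 (1 : Matrix (Fin 2) (Fin 2) ℤ)).submatrix e.symm e.symm with hA'
  have hUnit : IsUnit A' := by
    rw [Matrix.isUnit_iff_isUnit_det, hA', Matrix.det_submatrix_equiv_self,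
      Matrix.det_fromBlocks_zero₂₁]
    simpa using Matrix.isUnit_iff_isUnit_det A |>.mp hA
  have key : A' * colEnlarge M ξ x * A'ᵀ = colEnlarge (A * M * Aᵀ) (A.mulVec ξ) x := by
    rw [colEnlarge_blocks, colEnlarge_blocks, hA', Matrix.transpose_submatrix,
      Matrix.fromBlocks_transpose]
    rw [Matrix.submatrix_mul_equiv _ _ _ e.symm _, Matrix.submatrix_mul_equiv _ _ _ e.symm _]
    congr 1
    rw [Matrix.fromBlocks_multiply, Matrix.fromBlocks_multiply]
    simp [Matrix.mul_assoc, colB_mul]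
  have := SStep.congr (colEnlarge M ξ x) A' hUnit
  rwa [key] at this

theorem step_congr_rowEnl {m : ℕ} (M A : Matrix (Fin m) (Fin m) ℤ) (hA : IsUnit A)
    (ξ : Fin m → ℤ) (x : ℤ) :
    SStep ⟨m + 2, rowEnlarge M ξ x⟩ ⟨m + 2, rowEnlarge (A * M * Aᵀ) (A.mulVec ξ) x⟩ := by
  have h := sstep_transpose (step_congr_colEnl Mᵀ A hA ξ x)
  have e1 : (colEnlarge Mᵀ ξ x)ᵀ = rowEnlarge M ξ x := (rowEnlarge_eq M ξ x).symm
  have e2 : (colEnlarge (A * Mᵀ * Aᵀ) (A.mulVec ξ) x)ᵀ =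
      rowEnlarge (A * M * Aᵀ) (A.mulVec ξ) x := by
    rw [rowEnlarge_eq]
    congr 1
    simp [Matrix.transpose_mul, Matrix.mul_assoc]
  simpa [e1, e2] using h

def pad {m : ℕ} (ξ : Fin m → ℤ) : Fin (m + 2) → ℤ :=
  fun i => if h : (i : ℕ) < m then ξ ⟨i, h⟩ else 0

def swapf (m : ℕ) : Fin (m + 4) → Fin (m + 4) := fun i =>
  if _h : (i : ℕ) < m then i
  else if _h2 : (i : ℕ) < m + 2 then ⟨(i : ℕ) + 2, by omega⟩
  else ⟨(i : ℕ) - 2, by have := i.isLt; omega⟩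

theorem swapf_val (m : ℕ) (i : Fin (m + 4)) :
    ((swapf m i : Fin (m + 4)) : ℕ) =
      if (i : ℕ) < m then (i : ℕ)
      else if (i : ℕ) < m + 2 then (i : ℕ) + 2 else (i : ℕ) - 2 := by
  unfold swapf
  split_ifs <;> simp

theorem swapf_invol (m : ℕ) : Function.Involutive (swapf m) := by
  intro i
  have hi4 : (i : ℕ) < m + 4 := i.isLt
  apply Fin.ext
  have h1 := swapf_val m i
  have h2 := swapf_val m (swapf m i)
  split_ifs at h1 h2 <;> omega

def swapPerm (m : ℕ) : Equiv.Perm (Fin (m + 4)) := (swapf_invol m).toPerm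

set_option maxHeartbeats 2000000 in
theorem E_cc {m : ℕ} (M : Matrix (Fin m) (Fin m) ℤ) (ξ ξ' : Fin m → ℤ) (x x' : ℤ) :
    (colEnlarge (colEnlarge M ξ' x') (pad ξ) x).submatrix (swapPerm m) (swapPerm m) =
      colEnlarge (colEnlarge M ξ x) (pad ξ') x' := by
  ext i j
  have hi4 : (i : ℕ) < m + 4 := i.isLt
  have hj4 : (j : ℕ) < m + 4 := j.isLt
  have hsi := swapf_val m i
  have hsj := swapf_val m j
  simp only [Matrix.submatrix_apply, swapPerm, Function.Involutive.coe_toPerm,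
    colEnlarge, pad, Fin.val_mk]
  split_ifs at hsi hsj ⊢ <;>
    first
      | rfl
      | omega
      | (exfalso; omega)
      | (congr <;> exact Fin.ext (by simp only [Fin.val_mk]; omega))

set_option maxHeartbeats 2000000 in
theorem E_cr {m : ℕ} (M : Matrix (Fin m) (Fin m) ℤ) (ξ ξ' : Fin m → ℤ) (x x' : ℤ) :
    (colEnlarge (rowEnlarge M ξ' x') (pad ξ) x).submatrix (swapPerm m) (swapPerm m) =
      rowEnlarge (colEnlarge M ξ x) (pad ξ') x' := by
  ext i j
  have hi4 : (i : ℕ) < m + 4 := i.isLt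
  have hj4 : (j : ℕ) < m + 4 := j.isLt
  have hsi := swapf_val m i
  have hsj := swapf_val m j
  simp only [Matrix.submatrix_apply, swapPerm, Function.Involutive.coe_toPerm,
    colEnlarge, rowEnlarge, pad, Fin.val_mk]
  split_ifs at hsi hsj ⊢ <;>
    first
      | rfl
      | (exfalso; omega)
      | omega
      | (congr <;> exact Fin.ext (by simp only [Fin.val_mk]; omega))

theorem transpose_colEnlarge {m : ℕ} (N : Matrix (Fin m) (Fin m) ℤ) (η : Fin m → ℤ) (y : ℤ) :
    (colEnlarge N η y)ᵀ = rowEnlarge Nᵀ η y := by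
  rw [rowEnlarge_eq, Matrix.transpose_transpose]

theorem transpose_rowEnlarge {m : ℕ} (N : Matrix (Fin m) (Fin m) ℤ) (η : Fin m → ℤ) (y : ℤ) :
    (rowEnlarge N η y)ᵀ = colEnlarge Nᵀ η y := by
  rw [rowEnlarge_eq, Matrix.transpose_transpose]

theorem E_rc {m : ℕ} (M : Matrix (Fin m) (Fin m) ℤ) (ξ ξ' : Fin m → ℤ) (x x' : ℤ) :
    (rowEnlarge (colEnlarge M ξ' x') (pad ξ) x).submatrix (swapPerm m) (swapPerm m) =
      colEnlarge (rowEnlarge M ξ x) (pad ξ') x' := by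
  have h := congrArg Matrix.transpose (E_cr Mᵀ ξ ξ' x x')
  rw [Matrix.transpose_submatrix, transpose_colEnlarge, transpose_rowEnlarge,
    transpose_rowEnlarge, transpose_colEnlarge, Matrix.transpose_transpose] at h
  exact h

theorem E_rr {m : ℕ} (M : Matrix (Fin m) (Fin m) ℤ) (ξ ξ' : Fin m → ℤ) (x x' : ℤ) :
    (rowEnlarge (rowEnlarge M ξ' x') (pad ξ) x).submatrix (swapPerm m) (swapPerm m) =
      rowEnlarge (rowEnlarge M ξ x) (pad ξ') x' := by
  have h := congrArg Matrix.transpose (E_cc Mᵀ ξ ξ' x x')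
  rw [Matrix.transpose_submatrix, transpose_colEnlarge, transpose_colEnlarge,
    transpose_colEnlarge, transpose_colEnlarge, Matrix.transpose_transpose] at h
  exact h

theorem sstep_diamond : ∀ a b c : SqMat, SStep a b → SStep a c →
    ∃ d, Relation.ReflGen SStep b d ∧ Relation.ReflTransGen SStep c d := by
  intro a b c h1 h2
  cases h1 with
  | @congr m M A hA =>
    cases h2 with
    | congr _ B hB =>
      exact ⟨⟨m, A * M * Aᵀ⟩, Relation.ReflGen.refl,
        Relation.ReflTransGen.head (congr_inv M B hB)
          (Relation.ReflTransGen.single (SStep.congr M A hA))⟩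
    | colEnl _ ξ x =>
      exact ⟨⟨m + 2, colEnlarge (A * M * Aᵀ) (A.mulVec ξ) x⟩,
        Relation.ReflGen.single (SStep.colEnl _ _ _),
        Relation.ReflTransGen.single (step_congr_colEnl M A hA ξ x)⟩
    | rowEnl _ ξ x =>
      exact ⟨⟨m + 2, rowEnlarge (A * M * Aᵀ) (A.mulVec ξ) x⟩,
        Relation.ReflGen.single (SStep.rowEnl _ _ _),
        Relation.ReflTransGen.single (step_congr_rowEnl M A hA ξ x)⟩
  | @colEnl m M ξ x =>
    cases h2 with
    | congr _ B hB =>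
      exact ⟨⟨m + 2, colEnlarge (B * M * Bᵀ) (B.mulVec ξ) x⟩,
        Relation.ReflGen.single (step_congr_colEnl M B hB ξ x),
        Relation.ReflTransGen.single (SStep.colEnl _ _ _)⟩
    | colEnl _ ξ' x' =>
      refine ⟨⟨m + 4, colEnlarge (colEnlarge M ξ x) (pad ξ') x'⟩,
        Relation.ReflGen.single (SStep.colEnl _ _ _), ?_⟩
      refine Relation.ReflTransGen.head (SStep.colEnl _ (pad ξ) x) ?_
      refine Relation.ReflTransGen.single ?_
      have := step_reindex (colEnlarge (colEnlarge M ξ' x') (pad ξ) x) (swapPerm m)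
      rwa [E_cc] at this
    | rowEnl _ ξ' x' =>
      refine ⟨⟨m + 4, rowEnlarge (colEnlarge M ξ x) (pad ξ') x'⟩,
        Relation.ReflGen.single (SStep.rowEnl _ _ _), ?_⟩
      refine Relation.ReflTransGen.head (SStep.colEnl _ (pad ξ) x) ?_
      refine Relation.ReflTransGen.single ?_
      have := step_reindex (colEnlarge (rowEnlarge M ξ' x') (pad ξ) x) (swapPerm m)
      rwa [E_cr] at this
  | @rowEnl m M ξ x =>
    cases h2 with
    | congr _ B hB =>
      exact ⟨⟨m + 2, rowEnlarge (B * M * Bᵀ) (B.mulVec ξ) x⟩,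
        Relation.ReflGen.single (step_congr_rowEnl M B hB ξ x),
        Relation.ReflTransGen.single (SStep.rowEnl _ _ _)⟩
    | colEnl _ ξ' x' =>
      refine ⟨⟨m + 4, colEnlarge (rowEnlarge M ξ x) (pad ξ') x'⟩,
        Relation.ReflGen.single (SStep.colEnl _ _ _), ?_⟩
      refine Relation.ReflTransGen.head (SStep.rowEnl _ (pad ξ) x) ?_
      refine Relation.ReflTransGen.single ?_
      have := step_reindex (rowEnlarge (colEnlarge M ξ' x') (pad ξ) x) (swapPerm m)
      rwa [E_rc] at this
    | rowEnl _ ξ' x' =>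
      refine ⟨⟨m + 4, rowEnlarge (rowEnlarge M ξ x) (pad ξ') x'⟩,
        Relation.ReflGen.single (SStep.rowEnl _ _ _), ?_⟩
      refine Relation.ReflTransGen.head (SStep.rowEnl _ (pad ξ) x) ?_
      refine Relation.ReflTransGen.single ?_
      have := step_reindex (rowEnlarge (rowEnlarge M ξ' x') (pad ξ) x) (swapPerm m)
      rwa [E_rr] at this

/-- If `M₁ ~ M₂` in the smallest equivalence relation generated by unimodular
congruences and row/column enlargements, then there is a matrix `M₃` reachable
from both `M₁` and `M₂` by sequences of such elementary steps. -/
theorem sEquiv_directed (M₁ M₂ : SqMat) (h : Relation.EqvGen SStep M₁ M₂) :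
    ∃ M₃ : SqMat, Relation.ReflTransGen SStep M₁ M₃ ∧
      Relation.ReflTransGen SStep M₂ M₃ := by
  have hEquiv := Relation.equivalence_join_reflTransGen sstep_diamond
  have h2 : Relation.EqvGen (Relation.Join (Relation.ReflTransGen SStep)) M₁ M₂ :=
    Relation.EqvGen.mono
      (fun a b hab => (⟨b, Relation.ReflTransGen.single hab, Relation.ReflTransGen.refl⟩ :
        Relation.Join (Relation.ReflTransGen SStep) a b)) _ _ h
  exact hEquiv.eqvGen_iff.mp h2
end

section
/- Fix k ≥ 1 and let Φ : Matrix (Fin k) (Fin k) ℤ → ℤ be the ℤ-linear map defined by Φ(f) = Σ_{a,b} (-1)^{a+b} f a b, where a and b range over Fin k and the exponents use the natural-number values of a and b. Let S be the set of matrices consisting of all 'column moves' stdBasisMatrix a b 1 + stdBasisMatrix a b' 1, where a, b, b' ∈ Fin k and b' is the successor of b (i.e. (b' : ℕ) = (b : ℕ) + 1 < k), together with all 'row moves' stdBasisMatrix a b 1 + stdBasisMatrix a' b 1, where (a' : ℕ) = (a : ℕ) + 1 < k. Then the ℤ-submodule of Matrix (Fin k) (Fin k) ℤ spanned by S is exactly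 the kernel of Φ: a k × k integer matrix f satisfies Σ_{a,b} (-1)^{a+b} f a b = 0 if and only if f lies in the span of S. -/
open Matrix

/-- A `k × k` integer matrix `f` satisfies `∑ a b, (-1)^(a+b) * f a b = 0` if and
only if it lies in the ℤ-span of the matrices
`stdBasisMatrix a b 1 + stdBasisMatrix a b' 1` (with `(b' : ℕ) = b + 1`) and
`stdBasisMatrix a b 1 + stdBasisMatrix a' b 1` (with `(a' : ℕ) = a + 1`). -/
theorem ker_alternating_sum_eq_span_moves (k : ℕ) (hk : 1 ≤ k)
    (f : Matrix (Fin k) (Fin k) ℤ) :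
    (∑ a : Fin k, ∑ b : Fin k, (-1 : ℤ) ^ ((a : ℕ) + (b : ℕ)) * f a b = 0) ↔
      f ∈ Submodule.span ℤ
        ({ m : Matrix (Fin k) (Fin k) ℤ |
            ∃ a b b' : Fin k, ((b' : ℕ) = (b : ℕ) + 1) ∧
              m = single a b 1 + single a b' 1 } ∪
         { m : Matrix (Fin k) (Fin k) ℤ |
            ∃ a a' b : Fin k, ((a' : ℕ) = (a : ℕ) + 1) ∧
              m = single a b 1 + single a' b 1 }) := by
  obtain ⟨n, rfl⟩ : ∃ n, k = n + 1 := ⟨k - 1, by omega⟩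
  set S := ({ m : Matrix (Fin (n+1)) (Fin (n+1)) ℤ |
            ∃ a b b' : Fin (n+1), ((b' : ℕ) = (b : ℕ) + 1) ∧
              m = single a b 1 + single a b' 1 } ∪
         { m : Matrix (Fin (n+1)) (Fin (n+1)) ℤ |
            ∃ a a' b : Fin (n+1), ((a' : ℕ) = (a : ℕ) + 1) ∧
              m = single a b 1 + single a' b 1 }) with hS
  set M := Submodule.span ℤ S with hM
  -- Φ as a linear functional
  have hΦstd : ∀ a b : Fin (n+1),
      (∑ a' : Fin (n+1), ∑ b' : Fin (n+1),
        (-1 : ℤ) ^ ((a' : ℕ) + (b' : ℕ)) * single a b (1:ℤ) a' b')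
        = (-1 : ℤ) ^ ((a : ℕ) + (b : ℕ)) := by
    intro a b
    rw [Finset.sum_eq_single a]
    · rw [Finset.sum_eq_single b]
      · simp [single]
      · intro b' _ hb'
        simp [single, hb'.symm]
      · simp
    · intro a' _ ha'
      apply Finset.sum_eq_zero
      intro b' _
      simp [single, ha'.symm]
    · simp
  constructor
  · intro hsum
    -- generators in M
    have hcol : ∀ (a : Fin (n+1)) (i : Fin n),
        single a i.castSucc (1:ℤ) + single a i.succ 1 ∈ M :=
      fun a i => Submodule.subset_span (Or.inl ⟨a, i.castSucc, i.succ, by simp, rfl⟩)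
    have hrow : ∀ (i : Fin n) (b : Fin (n+1)),
        single i.castSucc b (1:ℤ) + single i.succ b 1 ∈ M :=
      fun i b => Submodule.subset_span (Or.inr ⟨i.castSucc, i.succ, b, by simp, rfl⟩)
    have row0 : ∀ a : Fin (n+1),
        single a 0 (1:ℤ) - ((-1:ℤ) ^ (a : ℕ)) • single 0 0 1 ∈ M := by
      intro a
      induction a using Fin.induction with
      | zero => simp
      | succ i ih =>
        have h := M.sub_mem (hrow i 0) ih
        have hv : ((i.succ : Fin (n+1)) : ℕ) = (i.castSucc : ℕ) + 1 := by simp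
        rw [hv, pow_succ]
        convert h using 1
        module
    have key : ∀ a b : Fin (n+1),
        single a b (1:ℤ) - ((-1:ℤ) ^ ((a:ℕ) + (b:ℕ))) • single 0 0 1 ∈ M := by
      intro a b
      induction b using Fin.induction with
      | zero => simpa using row0 a
      | succ i ih =>
        have h := M.sub_mem (hcol a i) ih
        have hv : ((a:ℕ) + ((i.succ : Fin (n+1)) : ℕ)) = ((a:ℕ) + (i.castSucc : ℕ)) + 1 := by
          simp; omega
        rw [hv, pow_succ]
        convert h using 1
        module
    have hmem : (∑ a : Fin (n+1), ∑ b : Fin (n+1),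
        f a b • (single a b (1:ℤ)
          - ((-1:ℤ) ^ ((a:ℕ) + (b:ℕ))) • single 0 0 1)) ∈ M :=
      Submodule.sum_mem _ fun a _ => Submodule.sum_mem _ fun b _ => M.smul_mem _ (key a b)
    have heq : (∑ a : Fin (n+1), ∑ b : Fin (n+1),
        f a b • (single a b (1:ℤ)
          - ((-1:ℤ) ^ ((a:ℕ) + (b:ℕ))) • single 0 0 1)) = f := by
      have : ∀ a b : Fin (n+1), f a b • (single a b (1:ℤ)
          - ((-1:ℤ) ^ ((a:ℕ) + (b:ℕ))) • single 0 0 1)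
        = single a b (f a b)
          - ((-1:ℤ) ^ ((a:ℕ) + (b:ℕ)) * f a b) • single 0 0 1 := by
        intro a b
        rw [smul_sub, smul_comm, smul_single, smul_single, mul_comm]
        simp [mul_comm]
      simp only [this, Finset.sum_sub_distrib, ← Finset.sum_smul, hsum, zero_smul, sub_zero]
      exact (matrix_eq_sum_single f).symm
    rw [← heq]; exact hmem
  · intro hf
    induction hf using Submodule.span_induction with
    | mem m hm =>
      rcases hm with ⟨a, b, b', hb', rfl⟩ | ⟨a, a', b, ha', rfl⟩
      · simp only [Matrix.add_apply, mul_add, Finset.sum_add_distrib, hΦstd]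
        rw [hb', show (a:ℕ) + ((b:ℕ)+1) = ((a:ℕ)+(b:ℕ))+1 from rfl, pow_succ]
        ring
      · simp only [Matrix.add_apply, mul_add, Finset.sum_add_distrib]
        rw [hΦstd a b, hΦstd a' b, ha',
          show ((a:ℕ)+1) + (b:ℕ) = ((a:ℕ)+(b:ℕ))+1 from by omega, pow_succ]
        ring
    | zero => simp
    | add x y _ _ hx hy =>
      simp only [Matrix.add_apply, mul_add, Finset.sum_add_distrib, hx, hy, add_zero]
    | smul c x _ hx =>
      simp only [Matrix.smul_apply, smul_eq_mul, mul_left_comm, ← Finset.mul_sum, hx, mul_zero]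
end

section
/- Fix n ≥ 1 and k ≥ 1, and let ι = Fin n × Fin k. For s, t ∈ ι with s ≠ t, write S(s,t) = stdBasisMatrix s t 1 + stdBasisMatrix t s 1 ∈ Matrix ι ι ℤ. Define the set of 'move matrices' T as follows: for every i, j ∈ Fin n, every a ∈ Fin k, and every b, b' ∈ Fin k with (b' : ℕ) = (b : ℕ) + 1, the move m is the sum of S((i,a),(j,b)) if (i,a) ≠ (j,b) (and 0 otherwise) and S((i,a),(j,b')) if (i,a) ≠ (j,b') (and 0 otherwise). Let V be the set of matrices f ∈ Matrix ι ι ℤ that are symmetric (fᵀ = f), have zero diagonal (f s s = 0 for all s), and satisfy condition (E): for all i ≠ j in Fin n, Σ_{a,b ∈ Fin k} (-1)^{(a:ℕ)+(b:ℕ)} f (i,a) (j,b) = 0. Then V equals the ℤ-submodule of Matrix ι ι ℤ spanned by T. -/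
open Matrix

/-- `Smat s t = stdBasisMatrix s t 1 + stdBasisMatrix t s 1`, the symmetric
elementary matrix with `1` in positions `(s, t)` and `(t, s)`. -/
def Smat {ι : Type*} [DecidableEq ι] (s t : ι) : Matrix ι ι ℤ :=
  Matrix.single s t 1 + Matrix.single t s 1

namespace SLAux

lemma Smat_comm {ι : Type*} [DecidableEq ι] (s t : ι) : Smat s t = Smat t s := by
  simp [Smat, add_comm]

lemma Smat_transpose {ι : Type*} [DecidableEq ι] (s t : ι) : (Smat s t)ᵀ = Smat s t := by
  ext u v
  simp [Smat, Matrix.single, and_comm]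
  rw [add_comm]

lemma Smat_diag {ι : Type*} [DecidableEq ι] {s t : ι} (h : s ≠ t) (u : ι) : Smat s t u u = 0 := by
  have h1 : ¬(s = u ∧ t = u) := by rintro ⟨rfl, rfl⟩; exact h rfl
  have h2 : ¬(t = u ∧ s = u) := by rintro ⟨rfl, rfl⟩; exact h rfl
  simp [Smat, Matrix.single, h1, h2]

lemma Esum {n k : ℕ} (s t : Fin n × Fin k) (i j : Fin n) :
    ∑ a : Fin k, ∑ b : Fin k, (-1:ℤ)^((a:ℕ)+(b:ℕ)) * Matrix.single s t (1:ℤ) (i,a) (j,b)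
      = if s.1 = i ∧ t.1 = j then (-1:ℤ)^((s.2:ℕ)+(t.2:ℕ)) else 0 := by
  obtain ⟨s1, s2⟩ := s
  obtain ⟨t1, t2⟩ := t
  simp [Matrix.single, Prod.ext_iff, ite_and, mul_ite]

lemma ESmat {n k : ℕ} (s t : Fin n × Fin k) (i j : Fin n) :
    ∑ a : Fin k, ∑ b : Fin k, (-1:ℤ)^((a:ℕ)+(b:ℕ)) * Smat s t (i,a) (j,b)
      = (if s.1 = i ∧ t.1 = j then (-1:ℤ)^((s.2:ℕ)+(t.2:ℕ)) else 0)
        + (if t.1 = i ∧ s.1 = j then (-1:ℤ)^((t.2:ℕ)+(s.2:ℕ)) else 0) := by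
  simp only [Smat, Matrix.add_apply, mul_add, Finset.sum_add_distrib, Esum]

variable (n k : ℕ)

/-- The set of move matrices. -/
def Tset : Set (Matrix (Fin n × Fin k) (Fin n × Fin k) ℤ) :=
  { m : Matrix (Fin n × Fin k) (Fin n × Fin k) ℤ |
      ∃ (i j : Fin n) (a b b' : Fin k), ((b' : ℕ) = (b : ℕ) + 1) ∧
        m = (if (i, a) = (j, b) then 0 else Smat (i, a) (j, b)) +
            (if (i, a) = (j, b') then 0 else Smat (i, a) (j, b')) }

/-- The span of the move matrices. -/
def MM : Submodule ℤ (Matrix (Fin n × Fin k) (Fin n × Fin k) ℤ) :=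
  Submodule.span ℤ (Tset n k)

variable {n k}

lemma gen_mem (i j : Fin n) (a b b' : Fin k) (hb : (b':ℕ) = (b:ℕ) + 1) :
    (if (i, a) = (j, b) then 0 else Smat (i, a) (j, b)) +
      (if (i, a) = (j, b') then 0 else Smat (i, a) (j, b')) ∈ MM n k :=
  Submodule.subset_span ⟨i, j, a, b, b', hb, rfl⟩

lemma step_cross {i j : Fin n} (hij : i ≠ j) (a b b' : Fin k) (hb : (b':ℕ) = (b:ℕ) + 1) :
    Smat ((i, a) : Fin n × Fin k) (j, b) + Smat (i, a) (j, b') ∈ MM n k := by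
  have h1 : ((i, a) : Fin n × Fin k) ≠ (j, b) := fun h => hij (congrArg Prod.fst h)
  have h2 : ((i, a) : Fin n × Fin k) ≠ (j, b') := fun h => hij (congrArg Prod.fst h)
  have := gen_mem i j a b b' hb
  rwa [if_neg h1, if_neg h2] at this

lemma step_cross' {i j : Fin n} (hij : i ≠ j) (a a' b : Fin k) (ha : (a':ℕ) = (a:ℕ) + 1) :
    Smat ((i, a) : Fin n × Fin k) (j, b) + Smat (i, a') (j, b) ∈ MM n k := by
  rw [Smat_comm (i,a), Smat_comm (i,a')]
  exact step_cross (Ne.symm hij) b a a' ha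

lemma within_consec (i : Fin n) (b b' : Fin k) (hb : (b':ℕ) = (b:ℕ) + 1) :
    Smat ((i, b) : Fin n × Fin k) (i, b') ∈ MM n k := by
  have hbb' : ((i, b) : Fin n × Fin k) ≠ (i, b') := by
    intro h
    have : b = b' := congrArg Prod.snd h
    rw [this] at hb; omega
  have := gen_mem i i b b b' hb
  rwa [if_pos rfl, if_neg hbb', zero_add] at this

lemma within_chain (m : ℕ) : ∀ (i : Fin n) (a c : Fin k), (c:ℕ) = (a:ℕ) + 1 + m →
    Smat ((i, a) : Fin n × Fin k) (i, c) ∈ MM n k := by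
  induction m with
  | zero => intro i a c hc; exact within_consec i a c (by omega)
  | succ m ih =>
    intro i a c hc
    have hc0 : (a:ℕ) + 1 + m < k := by have := c.isLt; omega
    set c₀ : Fin k := ⟨(a:ℕ) + 1 + m, hc0⟩ with hc₀
    have h₀ := ih i a c₀ rfl
    have hne1 : ((i, a) : Fin n × Fin k) ≠ (i, c₀) := by
      intro h
      have : a = c₀ := congrArg Prod.snd h
      have := congrArg Fin.val this
      simp [hc₀] at this; omega
    have hne2 : ((i, a) : Fin n × Fin k) ≠ (i, c) := by
      intro h
      have : a = c := congrArg Prod.snd h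
      have := congrArg Fin.val this
      omega
    have hgen := gen_mem i i a c₀ c (by simp [hc₀]; omega)
    rw [if_neg hne1, if_neg hne2] at hgen
    have := Submodule.sub_mem _ hgen h₀
    simpa using this

lemma within_all (i : Fin n) {a c : Fin k} (h : a ≠ c) :
    Smat ((i, a) : Fin n × Fin k) (i, c) ∈ MM n k := by
  rcases lt_trichotomy (a:ℕ) (c:ℕ) with hlt | heq | hgt
  · exact within_chain ((c:ℕ) - (a:ℕ) - 1) i a c (by omega)
  · exact absurd (Fin.ext heq) h
  · rw [Smat_comm]
    exact within_chain ((a:ℕ) - (c:ℕ) - 1) i c a (by omega)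

lemma col_reduce (hk : 0 < k) {i j : Fin n} (hij : i ≠ j) (a : Fin k) :
    ∀ (m : ℕ) (b : Fin k), (b:ℕ) = m →
      Smat ((i, a) : Fin n × Fin k) (j, b) - ((-1:ℤ)^m) • Smat (i, a) (j, ⟨0, hk⟩) ∈ MM n k := by
  intro m
  induction m with
  | zero =>
    intro b hb
    have : b = ⟨0, hk⟩ := Fin.ext hb
    subst this
    simp
  | succ m ih =>
    intro b hb
    have hm : m < k := by omega
    set b₀ : Fin k := ⟨m, hm⟩ with hb₀
    have hstep := step_cross hij a b₀ b (by simp [hb₀]; omega)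
    have hih := ih b₀ rfl
    have := Submodule.sub_mem _ hstep hih
    have heq : (Smat ((i, a) : Fin n × Fin k) (j, b₀) + Smat (i, a) (j, b)) -
        (Smat ((i, a) : Fin n × Fin k) (j, b₀) - ((-1:ℤ)^m) • Smat (i, a) (j, ⟨0, hk⟩))
        = Smat ((i, a) : Fin n × Fin k) (j, b) - ((-1:ℤ)^(m+1)) • Smat (i, a) (j, ⟨0, hk⟩) := by
      rw [pow_succ, mul_neg_one, neg_smul, sub_neg_eq_add]
      abel
    rwa [heq] at this

lemma row_reduce (hk : 0 < k) {i j : Fin n} (hij : i ≠ j) (c : Fin k) :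
    ∀ (m : ℕ) (a : Fin k), (a:ℕ) = m →
      Smat ((i, a) : Fin n × Fin k) (j, c) - ((-1:ℤ)^m) • Smat (i, ⟨0, hk⟩) (j, c) ∈ MM n k := by
  intro m
  induction m with
  | zero =>
    intro a ha
    have : a = ⟨0, hk⟩ := Fin.ext ha
    subst this
    simp
  | succ m ih =>
    intro a ha
    have hm : m < k := by omega
    set a₀ : Fin k := ⟨m, hm⟩ with ha₀
    have hstep := step_cross' hij a₀ a c (by simp [ha₀]; omega)
    have hih := ih a₀ rfl
    have := Submodule.sub_mem _ hstep hih
    have heq : (Smat ((i, a₀) : Fin n × Fin k) (j, c) + Smat (i, a) (j, c)) -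
        (Smat ((i, a₀) : Fin n × Fin k) (j, c) - ((-1:ℤ)^m) • Smat (i, ⟨0, hk⟩) (j, c))
        = Smat ((i, a) : Fin n × Fin k) (j, c) - ((-1:ℤ)^(m+1)) • Smat (i, ⟨0, hk⟩) (j, c) := by
      rw [pow_succ, mul_neg_one, neg_smul, sub_neg_eq_add]
      abel
    rwa [heq] at this

lemma cross_reduce (hk : 0 < k) {i j : Fin n} (hij : i ≠ j) (a b : Fin k) :
    Smat ((i, a) : Fin n × Fin k) (j, b)
      - ((-1:ℤ)^((a:ℕ)+(b:ℕ))) • Smat (i, ⟨0, hk⟩) (j, ⟨0, hk⟩) ∈ MM n k := by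
  have hA := col_reduce hk hij a (b:ℕ) b rfl
  have hB := row_reduce hk hij (⟨0, hk⟩ : Fin k) (a:ℕ) a rfl
  have := Submodule.add_mem _ hA (Submodule.smul_mem _ ((-1:ℤ)^(b:ℕ)) hB)
  have heq : (Smat ((i, a) : Fin n × Fin k) (j, b) - ((-1:ℤ)^(b:ℕ)) • Smat (i, a) (j, ⟨0, hk⟩))
      + ((-1:ℤ)^(b:ℕ)) • (Smat ((i, a) : Fin n × Fin k) (j, ⟨0, hk⟩)
          - ((-1:ℤ)^(a:ℕ)) • Smat (i, ⟨0, hk⟩) (j, ⟨0, hk⟩))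
      = Smat ((i, a) : Fin n × Fin k) (j, b)
        - ((-1:ℤ)^((a:ℕ)+(b:ℕ))) • Smat (i, ⟨0, hk⟩) (j, ⟨0, hk⟩) := by
    rw [smul_sub, smul_smul, ← pow_add, add_comm (b:ℕ) (a:ℕ)]
    abel
  rwa [heq] at this

lemma ord_lt {i j : Fin n} (h : i < j) (a b : Fin k) :
    (i:ℕ) * k + (a:ℕ) < (j:ℕ) * k + (b:ℕ) := by
  have h1 : (i:ℕ) + 1 ≤ (j:ℕ) := h
  have h2 : (a:ℕ) < k := a.isLt
  calc (i:ℕ) * k + (a:ℕ) < (i:ℕ) * k + k := by omega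
    _ = ((i:ℕ) + 1) * k := by ring
    _ ≤ (j:ℕ) * k := Nat.mul_le_mul_right k h1
    _ ≤ (j:ℕ) * k + (b:ℕ) := Nat.le_add_right _ _

end SLAux

open SLAux in
/-- The set of symmetric, zero-diagonal matrices `f` indexed by
`Fin n × Fin k` satisfying condition (E) — for all `i ≠ j`,
`∑ a b, (-1)^(a+b) * f (i,a) (j,b) = 0` — is exactly the ℤ-span of the move
matrices: for `i j : Fin n`, `a b b' : Fin k` with `(b' : ℕ) = b + 1`, the sum
of `Smat (i,a) (j,b)` (or `0` when `(i,a) = (j,b)`) and `Smat (i,a) (j,b')`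
(or `0` when `(i,a) = (j,b')`). -/
theorem symm_linking_table_eq_span_moves (n k : ℕ) (hn : 1 ≤ n) (hk : 1 ≤ k) :
    { f : Matrix (Fin n × Fin k) (Fin n × Fin k) ℤ |
        fᵀ = f ∧ (∀ s, f s s = 0) ∧
        ∀ i j : Fin n, i ≠ j →
          ∑ a : Fin k, ∑ b : Fin k,
            (-1 : ℤ) ^ ((a : ℕ) + (b : ℕ)) * f (i, a) (j, b) = 0 } =
      ↑(Submodule.span ℤ
        { m : Matrix (Fin n × Fin k) (Fin n × Fin k) ℤ |
            ∃ (i j : Fin n) (a b b' : Fin k), ((b' : ℕ) = (b : ℕ) + 1) ∧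
              m = (if (i, a) = (j, b) then 0 else Smat (i, a) (j, b)) +
                  (if (i, a) = (j, b') then 0 else Smat (i, a) (j, b')) }) := by
  apply Set.Subset.antisymm
  · -- hard direction: V ⊆ span
    rintro f ⟨hsym, hdiag, hE⟩
    show f ∈ MM n k
    have hfsymm : ∀ u v, f v u = f u v := fun u v => congrFun (congrFun hsym u) v
    set g : Matrix (Fin n × Fin k) (Fin n × Fin k) ℤ :=
      Matrix.of fun s t =>
        if (s.1:ℕ) * k + (s.2:ℕ) < (t.1:ℕ) * k + (t.2:ℕ) then f s t else 0 with hg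
    have key : f = ∑ s : Fin n × Fin k, ∑ t : Fin n × Fin k, g s t • Smat s t := by
      have e1 : ∑ s : Fin n × Fin k, ∑ t : Fin n × Fin k, g s t • Smat s t
          = (∑ s : Fin n × Fin k, ∑ t : Fin n × Fin k, Matrix.single s t (g s t))
            + ∑ s : Fin n × Fin k, ∑ t : Fin n × Fin k, Matrix.single t s (g s t) := by
        rw [← Finset.sum_add_distrib]
        apply Finset.sum_congr rfl
        intro s _
        rw [← Finset.sum_add_distrib]
        apply Finset.sum_congr rfl
        intro t _
        simp [Smat, smul_add, smul_single]
      have e2 : ∑ s : Fin n × Fin k, ∑ t : Fin n × Fin k, Matrix.single t s (g s t) = gᵀ := by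
        rw [Finset.sum_comm]
        exact (matrix_eq_sum_single gᵀ).symm
      rw [e1, e2, ← matrix_eq_sum_single g]
      ext ⟨u1, u2⟩ ⟨v1, v2⟩
      simp only [Matrix.add_apply, transpose_apply, hg, of_apply]
      rcases lt_trichotomy ((u1:ℕ) * k + (u2:ℕ)) ((v1:ℕ) * k + (v2:ℕ)) with h | h | h
      · rw [if_pos h, if_neg (by omega), add_zero]
      · rw [if_neg (by omega), if_neg (by omega)]
        have huv1 : u1 = v1 := by
          rcases lt_trichotomy u1 v1 with h' | h' | h'
          · exact absurd (ord_lt h' u2 v2) (by omega)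
          · exact h'
          · exact absurd (ord_lt h' v2 u2) (by omega)
        subst huv1
        have huv2 : u2 = v2 := by
          apply Fin.ext
          omega
        subst huv2
        rw [hdiag (u1, u2)]
        simp
      · rw [if_neg (by omega), if_pos h, zero_add, hfsymm]
    rw [key]
    rw [Fintype.sum_prod_type]
    apply Submodule.sum_mem
    intro i _
    simp only [Fintype.sum_prod_type]
    rw [Finset.sum_comm]
    apply Submodule.sum_mem
    intro j _
    rcases lt_trichotomy i j with hij | hij | hij
    · -- i < j: use condition (E)
      have hijne : i ≠ j := ne_of_lt hij
      have hgf : ∀ a b : Fin k, g (i, a) (j, b) = f (i, a) (j, b) := fun a b =>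
        if_pos (ord_lt hij a b)
      have key2 : ∀ a b : Fin k, g (i, a) (j, b) • Smat ((i, a) : Fin n × Fin k) (j, b)
          = g (i, a) (j, b) • (Smat ((i, a) : Fin n × Fin k) (j, b)
              - ((-1:ℤ)^((a:ℕ)+(b:ℕ))) • Smat (i, ⟨0, hk⟩) (j, ⟨0, hk⟩))
            + (g (i, a) (j, b) * (-1:ℤ)^((a:ℕ)+(b:ℕ))) • Smat (i, ⟨0, hk⟩) (j, ⟨0, hk⟩) := by
        intro a b
        rw [smul_sub, mul_smul]
        abel
      simp only [key2, Finset.sum_add_distrib]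
      apply Submodule.add_mem
      · apply Submodule.sum_mem
        intro a _
        apply Submodule.sum_mem
        intro b _
        exact Submodule.smul_mem _ _ (cross_reduce hk hijne a b)
      · simp only [← Finset.sum_smul]
        have hzero : (∑ a : Fin k, ∑ b : Fin k, g (i, a) (j, b) * (-1:ℤ)^((a:ℕ)+(b:ℕ))) = 0 := by
          rw [← hE i j hijne]
          apply Finset.sum_congr rfl
          intro a _
          apply Finset.sum_congr rfl
          intro b _
          rw [hgf, mul_comm]
        rw [hzero, zero_smul]
        exact Submodule.zero_mem _
    · -- i = j: within-string terms
      subst hij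
      apply Submodule.sum_mem
      intro a _
      apply Submodule.sum_mem
      intro b _
      by_cases hab : a = b
      · subst hab
        have : g (i, a) (i, a) = 0 := if_neg (by omega)
        rw [this, zero_smul]
        exact Submodule.zero_mem _
      · exact Submodule.smul_mem _ _ (within_all i hab)
    · -- j < i: coefficients vanish
      have hg0 : ∀ a b : Fin k, g (i, a) (j, b) = 0 := fun a b =>
        if_neg (by exact not_lt.2 (le_of_lt (ord_lt hij b a)))
      simp only [hg0, zero_smul, Finset.sum_const_zero]
      exact Submodule.zero_mem _
  · -- easy direction: span ⊆ V
    intro f hf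
    induction hf using Submodule.span_induction with
    | mem m hm =>
      obtain ⟨i0, j0, α, β, β', hβ, rfl⟩ := hm
      refine ⟨?_, ?_, ?_⟩
      · rw [transpose_add]
        split_ifs <;> simp [Smat_transpose]
      · intro s
        simp only [Matrix.add_apply]
        split_ifs with h1 h2 h2 <;> simp_all [Smat_diag]
      · intro i j hij
        simp only [Matrix.add_apply, mul_add, Finset.sum_add_distrib]
        by_cases h0 : i0 = j0
        · subst h0
          have hz : ∀ (β₀ : Fin k),
              (∑ a : Fin k, ∑ b : Fin k, (-1:ℤ)^((a:ℕ)+(b:ℕ)) *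
                (if ((i0, α) : Fin n × Fin k) = (i0, β₀) then
                  (0 : Matrix (Fin n × Fin k) (Fin n × Fin k) ℤ)
                  else Smat (i0, α) (i0, β₀)) (i, a) (j, b)) = 0 := by
            intro β₀
            split_ifs with h
            · simp
            · rw [ESmat]
              have c1 : ¬((i0 : Fin n) = i ∧ (i0 : Fin n) = j) := by
                rintro ⟨rfl, rfl⟩; exact hij rfl
              simp [c1]
          rw [hz β, hz β', add_zero]
        · have hne1 : ((i0, α) : Fin n × Fin k) ≠ (j0, β) :=
            fun h => h0 (congrArg Prod.fst h)
          have hne2 : ((i0, α) : Fin n × Fin k) ≠ (j0, β') :=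
            fun h => h0 (congrArg Prod.fst h)
          rw [if_neg hne1, if_neg hne2, ESmat, ESmat]
          have hpow : (-1:ℤ)^((α:ℕ)+(β':ℕ)) = -(-1:ℤ)^((α:ℕ)+(β:ℕ)) := by
            rw [hβ, ← add_assoc, pow_succ]; ring
          have hpow' : (-1:ℤ)^((β':ℕ)+(α:ℕ)) = -(-1:ℤ)^((β:ℕ)+(α:ℕ)) := by
            rw [hβ]
            rw [show (β:ℕ) + 1 + (α:ℕ) = (β:ℕ) + (α:ℕ) + 1 by omega, pow_succ]; ring
          split_ifs <;> simp_all [pow_add, pow_succ]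
    | zero => exact ⟨by simp, by simp, by simp⟩
    | add x y hx hy hpx hpy =>
      obtain ⟨hx1, hx2, hx3⟩ := hpx
      obtain ⟨hy1, hy2, hy3⟩ := hpy
      refine ⟨by rw [transpose_add, hx1, hy1], fun s => by simp [Matrix.add_apply, hx2 s, hy2 s], ?_⟩
      intro i j hij
      simp only [Matrix.add_apply, mul_add, Finset.sum_add_distrib, hx3 i j hij, hy3 i j hij, add_zero]
    | smul c x hx hpx =>
      obtain ⟨hx1, hx2, hx3⟩ := hpx
      refine ⟨by rw [transpose_smul, hx1], fun s => by simp [Matrix.smul_apply, hx2 s], ?_⟩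
      intro i j hij
      simp only [Matrix.smul_apply, smul_eq_mul]
      calc ∑ a : Fin k, ∑ b : Fin k, (-1:ℤ)^((a:ℕ)+(b:ℕ)) * (c * x (i, a) (j, b))
          = c * ∑ a : Fin k, ∑ b : Fin k, (-1:ℤ)^((a:ℕ)+(b:ℕ)) * x (i, a) (j, b) := by
            rw [Finset.mul_sum]
            apply Finset.sum_congr rfl
            intro a _
            rw [Finset.mul_sum]
            apply Finset.sum_congr rfl
            intro b _
            ring
        _ = 0 := by rw [hx3 i j hij, mul_zero]
end
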